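/- Let $X$ be a $C^1$ vector field on a closed Riemannian manifold $M$ with flow $\varphi_t$, and suppose $r_0 > 0$ satisfies: $d(a,b) \leq r_0\|X(a)\|$ implies $\tfrac{1}{2}\|X(a)\| \leq \|X(b)\| \leq 2\|X(a)\|$ for all $a$ with $X(a) \neq 0$. Then for every $t \geq 0$, $0 < \epsilon < r_0$, $x \in M$ with $X(x) \neq 0$, and $y \in B^*(x,t,\epsilon/4)$, one has $B^*(x,t,\epsilon/4) \subset B^*(y,t,\epsilon)$. -/
import Mathlib


open Metric Set Filter MeasureTheory
open scoped NNReal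

/-- Abstract setting for a `C¹` vector field `X` on a closed (compact) manifold `M`:
`φ` is the flow generated by `X` and `Xnorm x` represents `‖X x‖`, the norm of the
vector field with respect to the Riemannian metric. The `C¹` regularity of `X` is
reflected in the Lipschitz property of `‖X ·‖`. -/
structure FlowSetting (M : Type*) [MetricSpace M] where
  φ : ℝ → M → M
  flow_zero : ∀ x, φ 0 x = x
  flow_add : ∀ s t x, φ (s + t) x = φ s (φ t x)
  flow_cont : Continuous fun p : ℝ × M => φ p.1 p.2
  Xnorm : M → ℝ
  Xnorm_nonneg : ∀ x, 0 ≤ Xnorm x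
  lip : ∃ L : ℝ≥0, LipschitzWith L Xnorm

namespace FlowSetting

variable {M : Type*} [MetricSpace M] (F : FlowSetting M)

/-- The set of singularities of `X`. -/
def Sing : Set M := {x | F.Xnorm x = 0}

/-- `M* = M \ Sing(X)`. -/
def Mstar : Set M := {x | F.Xnorm x ≠ 0}

/-- `M_δ = {x : ‖X x‖ ≥ δ}`. -/
def Mdelta (δ : ℝ) : Set M := {x | δ ≤ F.Xnorm x}

/-- The rescaled dynamical `(t, ε)`-ball around `x`. -/
def Bstar (x : M) (t ε : ℝ) : Set M :=
  {y | ∀ s ∈ Icc (0:ℝ) t, dist (F.φ s x) (F.φ s y) < ε * F.Xnorm (F.φ s x)}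

/-- `S` is a rescaled `(t, ε, K)`-spanning set. -/
def IsSpanning (S : Finset M) (t ε : ℝ) (K : Set M) : Prop :=
  ↑S ⊆ F.Mstar ∧ K ⊆ ⋃ x ∈ S, F.Bstar x t ε

/-- Minimal cardinality of a rescaled `(t, ε, K)`-spanning set. -/
noncomputable def RstarK (t ε : ℝ) (K : Set M) : ℕ :=
  sInf {n | ∃ S : Finset M, S.card = n ∧ F.IsSpanning S t ε K}

/-- Minimal cardinality of a rescaled `(t, ε)`-spanning set. -/
noncomputable def Rstar (t ε : ℝ) : ℕ := F.RstarK t ε (F.Mdelta ε)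

/-- Local rescaled topological entropy `e*(X, K)` (the limit as `ε → 0` is a
supremum by monotonicity). -/
noncomputable def eStarK (K : Set M) : EReal :=
  ⨆ ε ∈ Ioi (0:ℝ),
    limsup (fun t : ℝ => ((Real.log (F.RstarK t ε K) / t : ℝ) : EReal)) atTop

/-- The rescaled topological entropy `e*(X)` (the limit as `ε → 0` is a
supremum by monotonicity). -/
noncomputable def eStar : EReal :=
  ⨆ ε ∈ Ioi (0:ℝ),
    limsup (fun t : ℝ => ((Real.log (F.Rstar t ε) / t : ℝ) : EReal)) atTop

/-- `E` is a rescaled `(t, ε, K)`-separating set. -/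
def IsSeparating (E : Finset M) (t ε : ℝ) (K : Set M) : Prop :=
  ↑E ⊆ K ∧ ∀ x ∈ E, F.Bstar x t ε ∩ ↑E = {x}

/-- Maximal cardinality of a rescaled `(t, ε, K)`-separating set. -/
noncomputable def Sstar (t ε : ℝ) (K : Set M) : ℕ :=
  sSup {n | ∃ E : Finset M, E.card = n ∧ F.IsSeparating E t ε K}

end FlowSetting

/-- if `r₀` satisfies the rescaling lemma, then for `0 < ε < r₀`,
`y ∈ B*(x,t,ε/4)` implies `B*(x,t,ε/4) ⊆ B*(y,t,ε)`. -/
theorem stmt2 {M : Type*} [MetricSpace M] [CompactSpace M] [ConnectedSpace M]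
    (F : FlowSetting M) (r₀ : ℝ) (hr₀ : 0 < r₀)
    (h : ∀ a b : M, F.Xnorm a ≠ 0 → dist a b ≤ r₀ * F.Xnorm a →
      F.Xnorm a / 2 ≤ F.Xnorm b ∧ F.Xnorm b ≤ 2 * F.Xnorm a)
    (t : ℝ) (ht : 0 ≤ t) (ε : ℝ) (hε : 0 < ε) (hεr : ε < r₀)
    (x : M) (hx : F.Xnorm x ≠ 0) (y : M) (hy : y ∈ F.Bstar x t (ε/4)) :
    F.Bstar x t (ε/4) ⊆ F.Bstar y t ε := by
  intro z hz s hs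
  have hxy := hy s hs
  have hxz := hz s hs
  have hXpos : 0 < F.Xnorm (F.φ s x) := by
    by_contra hc
    push_neg at hc
    have := dist_nonneg (x := F.φ s x) (y := F.φ s y)
    nlinarith
  have hle : dist (F.φ s x) (F.φ s y) ≤ r₀ * F.Xnorm (F.φ s x) := by nlinarith
  have hb := (h (F.φ s x) (F.φ s y) (ne_of_gt hXpos) hle).1
  have := dist_triangle (F.φ s y) (F.φ s x) (F.φ s z)
  rw [dist_comm (F.φ s y) (F.φ s x)] at this
  nlinarith
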